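/- Let G be a strongly connected digraph. For any divisor f : V → ℤ on G, rank(f) = dist(d⁺ − 1 − f) − 1, where d⁺ is the outdegree vector and 1 is the all-ones vector. -/

import Mathlib

open Finset

variable {V : Type} [Fintype V] [DecidableEq V]

/-- The outdegree of a vertex `v` in the multidigraph with multiplicity function `m`
(`m u v` is the number of directed edges from `u` to `v`). -/
def outdeg (m : V → V → ℕ) (v : V) : ℤ := ∑ u, (m v u : ℤ)

/-- The indegree of a vertex. -/
def indeg (m : V → V → ℕ) (v : V) : ℤ := ∑ u, (m u v : ℤ)

/-- The digraph is loopless. -/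
def Loopless (m : V → V → ℕ) : Prop := ∀ v, m v v = 0

/-- The digraph is strongly connected: every vertex reaches every vertex on a directed path. -/
def StronglyConnected (m : V → V → ℕ) : Prop :=
  ∀ u v : V, Relation.ReflTransGen (fun a b => 0 < m a b) u v

/-- Firing vertex `v` in chip-distribution `x`: `v` sends a chip along each outgoing edge. -/
def fire (m : V → V → ℕ) (x : V → ℤ) (v : V) : V → ℤ :=
  fun u => x u + (m v u : ℤ) - (if u = v then outdeg m v else 0)

/-- The degree (total number of chips) of a chip-distribution / divisor. -/
def degSum (x : V → ℤ) : ℤ := ∑ v, x v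

/-- The state of the chip-firing game after `n` steps, starting from `x` and
firing the vertices `s 0, s 1, …` in this order. -/
def gameState (m : V → V → ℕ) (x : V → ℤ) (s : ℕ → V) : ℕ → (V → ℤ)
  | 0 => x
  | n + 1 => fire m (gameState m x s n) (s n)

/-- `s` encodes an infinite legal chip-firing game starting from `x`:
at each step the fired vertex is active. -/
def InfGame (m : V → V → ℕ) (x : V → ℤ) (s : ℕ → V) : Prop :=
  ∀ n, outdeg m (s n) ≤ gameState m x s n (s n)

/-- A chip-distribution is terminating if no infinite legal game starts from it. -/
def Terminating (m : V → V → ℕ) (x : V → ℤ) : Prop :=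
  ¬ ∃ s : ℕ → V, InfGame m x s

/-- The Laplacian of the digraph applied to `z`. -/
def lap (m : V → V → ℕ) (z : V → ℤ) : V → ℤ :=
  fun u => (∑ v, (m v u : ℤ) * z v) - outdeg m u * z u

/-- Linear equivalence: `x ∼ y` iff `x = y + L z` for some integer vector `z`. -/
def LinEquiv (m : V → V → ℕ) (x y : V → ℤ) : Prop :=
  ∃ z : V → ℤ, x = y + lap m z

/-- The distance of `x` from the non-terminating distributions:
the minimum degree of a nonnegative `y` such that `x + y` is non-terminating. -/
noncomputable def chipDist (m : V → V → ℕ) (x : V → ℤ) : ℕ :=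
  sInf {n : ℕ | ∃ y : V → ℤ, 0 ≤ y ∧ degSum y = (n : ℤ) ∧ ¬ Terminating m (x + y)}

/-- A divisor is equi-effective if it is linearly equivalent to an effective divisor. -/
def EquiEffective (m : V → V → ℕ) (f : V → ℤ) : Prop :=
  ∃ g : V → ℤ, 0 ≤ g ∧ LinEquiv m f g

/-- The rank of a divisor `f`:
`min {deg g - 1 : g ≥ 0 and f - g is not equi-effective}`. -/
noncomputable def divRank (m : V → V → ℕ) (f : V → ℤ) : ℤ :=
  sInf {d : ℤ | ∃ g : V → ℤ, 0 ≤ g ∧ degSum g - 1 = d ∧ ¬ EquiEffective m (f - g)}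

set_option linter.unusedSectionVars false

/-!
The heart of the matter is that `f` is equi-effective iff `d⁺ - 1 - f` is terminating. If
`x = d⁺ - 1 - f` terminates, legal firings bring it to a stable `y ∼ x`, and `d⁺ - 1 - y` is an
effective divisor equivalent to `f`. Conversely no vertex of `d⁺ - 1 - g` with `g ≥ 0` is active,
and non-termination is invariant under linear equivalence: on a loopless digraph the states of an
infinite game are bounded, so the game cycles, and by strong connectivity the firing vector of a
cycle is a positive vector `p` in the kernel of the Laplacian. Hence every vertex fires, so an
extra firing of `v` is absorbed by skipping the next firing of `v` in the game; and adding a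
multiple of `p` turns any `z` into a nonnegative one with the same `lap m z`.
With this, `f - g` fails to be equi-effective exactly when `(d⁺ - 1 - f) + g` is non-terminating,
so the sets defining `rank f + 1` and `dist (d⁺ - 1 - f)` coincide.
-/

section Laplacian

variable (m : V → V → ℕ)

lemma lap_zero : lap m 0 = 0 := by
  funext u
  simp [lap]

lemma lap_add (a b : V → ℤ) : lap m (a + b) = lap m a + lap m b := by
  funext u
  simp only [lap, Pi.add_apply, mul_add, sum_add_distrib]
  ring

lemma lap_sub (a b : V → ℤ) : lap m (a - b) = lap m a - lap m b := by
  funext u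
  simp only [lap, Pi.sub_apply, mul_sub, sum_sub_distrib]
  ring

lemma lap_smul (k : ℤ) (a : V → ℤ) : lap m (k • a) = k • lap m a := by
  funext u
  simp only [lap, Pi.smul_apply, smul_eq_mul, mul_sub, mul_sum]
  congr 1
  · exact sum_congr rfl fun v _ => by ring
  · ring

lemma fire_eq_add_lap_single (x : V → ℤ) (v : V) :
    fire m x v = x + lap m (Pi.single v 1) := by
  funext u
  by_cases h : u = v
  · subst h
    simp [fire, lap, Pi.single_apply]
    ring
  · simp [fire, lap, Pi.single_apply, h]

lemma degSum_add (x y : V → ℤ) : degSum (x + y) = degSum x + degSum y :=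
  sum_add_distrib

lemma degSum_lap (z : V → ℤ) : degSum (lap m z) = 0 := by
  simp only [degSum, lap, sum_sub_distrib, outdeg, sum_mul]
  rw [sum_comm]
  simp

lemma degSum_fire (x : V → ℤ) (v : V) : degSum (fire m x v) = degSum x := by
  rw [fire_eq_add_lap_single, degSum_add, degSum_lap, add_zero]

lemma fire_comm (x : V → ℤ) (u v : V) : fire m (fire m x u) v = fire m (fire m x v) u := by
  funext w
  simp only [fire]
  ring

lemma le_fire_of_ne (x : V → ℤ) {u v : V} (h : u ≠ v) : x u ≤ fire m x v u := by
  simp [fire, h]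

end Laplacian

def firingCount (s : ℕ → V) (n : ℕ) (v : V) : ℤ := #{k ∈ range n | s k = v}

section FiringCount

variable (s : ℕ → V)

lemma firingCount_zero : firingCount s 0 = 0 := by
  funext v
  simp [firingCount]

lemma firingCount_succ (n : ℕ) :
    firingCount s (n + 1) = firingCount s n + Pi.single (s n) 1 := by
  funext v
  by_cases h : s n = v
  · subst h
    simp [firingCount, range_add_one, filter_insert]
  · simp [firingCount, range_add_one, filter_insert, h, Ne.symm h]

lemma firingCount_mono {i j : ℕ} (h : i ≤ j) : firingCount s i ≤ firingCount s j := fun v => by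
  simp only [firingCount, Nat.cast_le]
  exact card_le_card (filter_subset_filter _ (range_subset_range.2 h))

lemma degSum_firingCount (n : ℕ) : degSum (firingCount s n) = n := by
  simp only [degSum, firingCount]
  rw [← Nat.cast_sum, ← card_eq_sum_card_fiberwise fun _ _ => mem_univ _, card_range]

lemma exists_eq_of_firingCount_pos {n : ℕ} {v : V} (h : 0 < firingCount s n v) : ∃ k, s k = v := by
  obtain ⟨k, hk⟩ := card_pos.1 (Int.natCast_pos.1 h)
  exact ⟨k, (mem_filter.1 hk).2⟩

end FiringCount

section Game

variable {m : V → V → ℕ}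

lemma gameState_eq_add_lap_firingCount (x : V → ℤ) (s : ℕ → V) (n : ℕ) :
    gameState m x s n = x + lap m (firingCount s n) := by
  induction n with
  | zero => simp [gameState, firingCount_zero, lap_zero]
  | succ n ih =>
    rw [gameState, ih, fire_eq_add_lap_single, firingCount_succ, lap_add, add_assoc]

lemma degSum_gameState (x : V → ℤ) (s : ℕ → V) (n : ℕ) :
    degSum (gameState m x s n) = degSum x := by
  rw [gameState_eq_add_lap_firingCount, degSum_add, degSum_lap, add_zero]

lemma gameState_succ_eq_tail (x : V → ℤ) (s : ℕ → V) (n : ℕ) :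
    gameState m x s (n + 1) = gameState m (fire m x (s 0)) (fun k => s (k + 1)) n := by
  induction n with
  | zero => rfl
  | succ n ih => rw [gameState, ih, gameState]

lemma InfGame.tail {x : V → ℤ} {s : ℕ → V} (hs : InfGame m x s) :
    InfGame m (fire m x (s 0)) (fun k => s (k + 1)) := fun n => by
  rw [← gameState_succ_eq_tail]
  exact hs (n + 1)

lemma terminating_of_lt_outdeg {x : V → ℤ} (hx : ∀ v, x v < outdeg m v) : Terminating m x :=
  fun ⟨s, hs⟩ => (hs 0).not_gt (hx (s 0))

lemma not_terminating_of_invariant {P : (V → ℤ) → Prop} {x : V → ℤ} (hx : P x)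
    (hP : ∀ y, P y → ∃ v, outdeg m v ≤ y v ∧ P (fire m y v)) : ¬ Terminating m x := by
  have : Nonempty V := ⟨(hP x hx).choose⟩
  choose! next hnext using hP
  let y : ℕ → V → ℤ := fun n => (fun z => fire m z (next z))^[n] x
  have hy : ∀ n, gameState m x (fun k => next (y k)) n = y n ∧ P (y n) := by
    intro n
    induction n with
    | zero => exact ⟨rfl, hx⟩
    | succ n ih =>
      have hsucc : y (n + 1) = fire m (y n) (next (y n)) :=
        Function.iterate_succ_apply' _ n x
      rw [gameState, ih.1, hsucc]
      exact ⟨rfl, (hnext _ ih.2).2⟩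
  refine fun h => h ⟨fun k => next (y k), fun n => ?_⟩
  rw [(hy n).1]
  exact (hnext _ (hy n).2).1

lemma not_terminating_of_sum_lt_degSum {x : V → ℤ}
    (h : ∑ v, (outdeg m v - 1) < degSum x) : ¬ Terminating m x := by
  refine not_terminating_of_invariant (P := fun y => degSum y = degSum x) rfl fun y hy => ?_
  obtain ⟨v, hv⟩ : ∃ v, outdeg m v ≤ y v := by
    by_contra! hlt
    have : degSum y ≤ ∑ v, (outdeg m v - 1) := sum_le_sum fun v _ => by linarith [hlt v]
    omega
  exact ⟨v, hv, (degSum_fire m y v).trans hy⟩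

lemma not_terminating_of_fire {y : V → ℤ} {v : V} (hv : outdeg m v ≤ y v)
    (h : ¬ Terminating m (fire m y v)) : ¬ Terminating m y := by
  refine not_terminating_of_invariant (P := fun z => z = y ∨ ¬ Terminating m z) (.inl rfl) ?_
  rintro z (rfl | hz)
  · exact ⟨v, hv, .inr h⟩
  · obtain ⟨s, hs⟩ := not_not.1 hz
    exact ⟨s 0, hs 0, .inr fun ht => ht ⟨_, hs.tail⟩⟩

end Game

section Loopless

variable {m : V → V → ℕ} (hloop : Loopless m)
include hloop

lemma InfGame.min_le_gameState {x : V → ℤ} {s : ℕ → V} (hs : InfGame m x s) (n : ℕ) (v : V) :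
    min (x v) 0 ≤ gameState m x s n v := by
  induction n generalizing v with
  | zero => exact min_le_left _ _
  | succ n ih =>
    rw [gameState]
    -- without loops the fired vertex keeps its surplus `≥ 0`; the other vertices only gain
    by_cases h : v = s n
    · subst h
      have := hs n
      simp only [fire, hloop (s n), if_true]
      omega
    · exact (ih v).trans (le_fire_of_ne m _ h)

lemma InfGame.exists_lt_gameState_eq {x : V → ℤ} {s : ℕ → V} (hs : InfGame m x s) :
    ∃ i j, i < j ∧ gameState m x s i = gameState m x s j := by
  set l := ∑ v, min (x v) 0
  refine Set.Finite.exists_lt_map_eq_of_forall_mem (t := Set.univ.pi fun v =>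
    Set.Icc (min (x v) 0) (degSum x - l)) (fun n v _ => ⟨hs.min_le_gameState hloop n v, ?_⟩)
    (Set.Finite.pi fun v => Set.finite_Icc _ _)
  have hsum : ∑ u, (gameState m x s n u - min (x u) 0) = degSum x - l := by
    rw [sum_sub_distrib, ← degSum, degSum_gameState]
  have := single_le_sum (f := fun u => gameState m x s n u - min (x u) 0)
    (fun u _ => sub_nonneg.2 (hs.min_le_gameState hloop n u)) (mem_univ v)
  have := min_le_right (x v) 0
  linarith

end Loopless

lemma pos_of_lap_eq_zero {m : V → V → ℕ} (hconn : StronglyConnected m) {σ : V → ℤ}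
    (hσ : 0 ≤ σ) (hlap : lap m σ = 0) {a : V} (ha : 0 < σ a) (v : V) : 0 < σ v := by
  induction hconn a v with
  | refl => exact ha
  | @tail c d _ hcd ih =>
    -- `(lap m σ) d = 0` and `σ d = 0` force `σ` to vanish at every in-neighbour of `d`
    refine (hσ d).lt_of_ne fun hd => ?_
    have hsum : ∑ w, (m w d : ℤ) * σ w = 0 := by
      simpa [lap, ← hd] using congrFun hlap d
    have := (sum_eq_zero_iff_of_nonneg fun w _ =>
      mul_nonneg (Int.natCast_nonneg _) (hσ w)).1 hsum c (mem_univ c)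
    have : (0 : ℤ) < m c d := by exact_mod_cast hcd
    nlinarith

section StronglyConnected

variable {m : V → V → ℕ} (hloop : Loopless m) (hconn : StronglyConnected m)
include hloop hconn

lemma InfGame.exists_firingCount_period {x : V → ℤ} {s : ℕ → V} (hs : InfGame m x s) :
    ∃ i j, (∀ v, 0 < firingCount s j v - firingCount s i v) ∧
      lap m (firingCount s j - firingCount s i) = 0 := by
  obtain ⟨i, j, hij, heq⟩ := hs.exists_lt_gameState_eq hloop
  have hlap : lap m (firingCount s j - firingCount s i) = 0 := by
    simp only [gameState_eq_add_lap_firingCount, add_right_inj] at heq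
    rw [lap_sub, heq, sub_self]
  have hnonneg : 0 ≤ firingCount s j - firingCount s i :=
    sub_nonneg.2 (firingCount_mono s hij.le)
  obtain ⟨a, ha⟩ : ∃ a, 0 < firingCount s j a - firingCount s i a := by
    by_contra! h
    have : degSum (firingCount s j - firingCount s i) ≤ 0 := sum_nonpos fun v _ => h v
    simp only [degSum, Pi.sub_apply, sum_sub_distrib] at this
    rw [← degSum, ← degSum, degSum_firingCount, degSum_firingCount] at this
    omega
  exact ⟨i, j, pos_of_lap_eq_zero hconn hnonneg hlap ha, hlap⟩

lemma InfGame.exists_eq {x : V → ℤ} {s : ℕ → V} (hs : InfGame m x s) (v : V) : ∃ t, s t = v := by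
  obtain ⟨i, j, hpos, -⟩ := hs.exists_firingCount_period hloop hconn
  exact exists_eq_of_firingCount_pos s ((hpos v).trans_le (sub_le_self _ (Int.natCast_nonneg _)))

lemma not_terminating_fire {x : V → ℤ} (hx : ¬ Terminating m x) (v : V) :
    ¬ Terminating m (fire m x v) := by
  obtain ⟨s, hs⟩ := not_not.1 hx
  obtain ⟨t, ht⟩ := hs.exists_eq hloop hconn v
  clear hx
  induction t generalizing x s with
  | zero => exact fun h => h ⟨_, ht ▸ hs.tail⟩
  | succ t ih =>
    by_cases h0 : s 0 = v
    · exact fun h => h ⟨_, h0 ▸ hs.tail⟩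
    have := ih _ hs.tail ht
    rw [fire_comm] at this
    exact not_terminating_of_fire ((hs 0).trans (le_fire_of_ne m x h0)) this

lemma not_terminating_add_lap_of_nonneg {x z : V → ℤ} (hx : ¬ Terminating m x) (hz : 0 ≤ z) :
    ¬ Terminating m (x + lap m z) := by
  obtain ⟨n, hn⟩ : ∃ n : ℕ, degSum z = n :=
    ⟨_, (Int.toNat_of_nonneg (sum_nonneg fun v _ => hz v)).symm⟩
  induction n generalizing x z with
  | zero =>
    have : z = 0 := funext fun v =>
      (sum_eq_zero_iff_of_nonneg fun v _ => hz v).1 hn v (mem_univ v)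
    rwa [this, lap_zero, add_zero]
  | succ n ih =>
    obtain ⟨v, hv⟩ : ∃ v, 0 < z v := by
      by_contra! h
      have : degSum z ≤ 0 := sum_nonpos fun v _ => h v
      omega
    have hz' : 0 ≤ z - Pi.single v 1 := fun u => by
      by_cases h : u = v
      · subst h
        simp
        omega
      · simpa [h] using hz u
    have hdeg : degSum (z - Pi.single v 1) = n := by
      simp only [degSum, Pi.sub_apply, sum_sub_distrib, sum_pi_single', mem_univ, if_true] at hn ⊢
      omega
    have := ih (not_terminating_fire hloop hconn hx v) hz' hdeg
    rwa [fire_eq_add_lap_single, add_assoc, ← lap_add, add_sub_cancel] at this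

lemma not_terminating_add_lap {x : V → ℤ} (hx : ¬ Terminating m x) (z : V → ℤ) :
    ¬ Terminating m (x + lap m z) := by
  obtain ⟨s, hs⟩ := not_not.1 hx
  obtain ⟨i, j, hpos, hlap⟩ := hs.exists_firingCount_period hloop hconn
  set p := firingCount s j - firingCount s i
  set k := ∑ v, |z v|
  have hz : 0 ≤ z + k • p := fun v => by
    have hk : |z v| ≤ k := single_le_sum (f := fun v => |z v|) (fun v _ => abs_nonneg _) (mem_univ v)
    have : k ≤ k * p v := le_mul_of_one_le_right (hk.trans' (abs_nonneg _)) (hpos v)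
    simp only [Pi.add_apply, Pi.smul_apply, smul_eq_mul, Pi.zero_apply]
    linarith [neg_abs_le (z v)]
  have := not_terminating_add_lap_of_nonneg hloop hconn hx hz
  rwa [lap_add, lap_smul, hlap, smul_zero, add_zero] at this

theorem equiEffective_iff_terminating (f : V → ℤ) :
    EquiEffective m f ↔ Terminating m (fun v => outdeg m v - 1 - f v) := by
  constructor
  · rintro ⟨g, hg, z, rfl⟩ hnt
    replace hnt : ¬ Terminating m _ := not_not.2 hnt
    have := not_terminating_add_lap hloop hconn hnt z
    refine this (terminating_of_lt_outdeg fun v => ?_)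
    simp only [Pi.add_apply]
    linarith [show (0 : ℤ) ≤ g v from hg v]
  · intro ht
    obtain ⟨σ, hσ⟩ : ∃ σ, ∀ v, (fun v => outdeg m v - 1 - f v) v + lap m σ v < outdeg m v := by
      by_contra! h
      refine not_terminating_of_invariant (P := fun y => ∃ σ, y = _ + lap m σ)
        ⟨0, by rw [lap_zero, add_zero]⟩ ?_ ht
      rintro _ ⟨σ, rfl⟩
      obtain ⟨v, hv⟩ := h σ
      exact ⟨v, hv, σ + Pi.single v 1, by rw [fire_eq_add_lap_single, lap_add, add_assoc]⟩
    refine ⟨fun v => f v - lap m σ v, fun v => ?_, σ, funext fun v => ?_⟩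
    · show (0 : ℤ) ≤ f v - lap m σ v
      linarith [hσ v]
    · simp

end StronglyConnected

section ChipDist

variable {m : V → V → ℕ}

lemma chipDist_le {x y : V → ℤ} (hy : 0 ≤ y) (h : ¬ Terminating m (x + y)) :
    (chipDist m x : ℤ) ≤ degSum y := by
  have hdeg : 0 ≤ degSum y := sum_nonneg fun v _ => hy v
  have := Nat.sInf_le (s := {n : ℕ | ∃ y : V → ℤ, 0 ≤ y ∧ degSum y = n ∧ ¬ Terminating m (x + y)})
    ⟨y, hy, (Int.toNat_of_nonneg hdeg).symm, h⟩
  unfold chipDist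
  omega

lemma exists_degSum_eq_chipDist [Nonempty V] (x : V → ℤ) :
    ∃ y, 0 ≤ y ∧ degSum y = chipDist m x ∧ ¬ Terminating m (x + y) := by
  let y : V → ℤ := fun v => |x v| + outdeg m v
  have hy : 0 ≤ y := fun v =>
    add_nonneg (abs_nonneg _) (sum_nonneg fun _ _ => Int.natCast_nonneg _)
  have hnt : ¬ Terminating m (x + y) := by
    refine not_terminating_of_sum_lt_degSum ?_
    calc ∑ v, (outdeg m v - 1) < ∑ v, outdeg m v :=
          sum_lt_sum_of_nonempty univ_nonempty fun v _ => by omega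
      _ ≤ degSum (x + y) := sum_le_sum fun v _ => by
          simp only [y, Pi.add_apply]
          linarith [neg_abs_le (x v)]
  exact Nat.sInf_mem (s := {n : ℕ | ∃ y : V → ℤ, 0 ≤ y ∧ degSum y = n ∧ ¬ Terminating m (x + y)})
    ⟨_, y, hy, (Int.toNat_of_nonneg (sum_nonneg fun v _ => hy v)).symm, hnt⟩

end ChipDist

/-- Duality between rank and dist: for any divisor `f` on a strongly connected digraph,
`rank(f) = dist(d⁺ - 1 - f) - 1`. -/
theorem rank_eq_chipDist_sub_one
    {V : Type} [Fintype V] [DecidableEq V] [Nonempty V]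
    (m : V → V → ℕ) (hloop : Loopless m) (hconn : StronglyConnected m)
    (f : V → ℤ) :
    divRank m f = (chipDist m (fun v => outdeg m v - 1 - f v) : ℤ) - 1 := by
  set x : V → ℤ := fun v => outdeg m v - 1 - f v
  have key : ∀ g, EquiEffective m (f - g) ↔ Terminating m (x + g) := fun g => by
    convert equiEffective_iff_terminating hloop hconn (f - g) using 3
    simp only [x, Pi.add_apply, Pi.sub_apply]
    ring
  obtain ⟨y, hy, hdeg, hnt⟩ := exists_degSum_eq_chipDist (m := m) x
  refine IsLeast.csInf_eq ⟨⟨y, hy, by rw [hdeg], (key y).not.2 hnt⟩, ?_⟩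
  rintro _ ⟨g, hg, rfl, hne⟩
  linarith [chipDist_le hg ((key g).not.1 hne)]
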